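/- arXiv:1712.08927 — 5 statements merged into one kernel-verified Lean document; each statement's English description precedes it below -/
import Mathlib

section
/- Define the multiset I*_s = {⌊s/s⌋, ⌊s/(s−1)⌋, …, ⌊s/2⌋} (of cardinality s−1) for a positive integer s. Then for all positive integers r ≤ s, the multiset {r} ∪ I*_r ∪ I*_s is dominated by I*_{r+s}, in the sense that there is a bijection (after padding the shorter multiset with zeros) under which each element of the first multiset is ≤ the corresponding element of the second. -/
/-- The multiset `I*_s = {⌊s/m⌋ : m = 2, …, s}` (of cardinality `s - 1`). -/
def Istar (s : ℕ) : Multiset ℕ := (Finset.Icc 2 s).val.map (fun m => s / m)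

lemma countP_Istar (t k : ℕ) (hk : 1 ≤ k) :
    (Istar t).countP (fun a => k ≤ a) = t / k - 1 := by
  unfold Istar
  rw [Multiset.countP_map]
  have hfil : (Finset.Icc 2 t).filter (fun m => k ≤ t / m) = Finset.Icc 2 (t / k) := by
    ext m
    simp only [Finset.mem_filter, Finset.mem_Icc]
    constructor
    · rintro ⟨⟨h2, hmt⟩, hkm⟩
      refine ⟨h2, ?_⟩
      rw [Nat.le_div_iff_mul_le hk]
      rw [Nat.le_div_iff_mul_le (by omega : 0 < m)] at hkm
      rw [mul_comm]; exact hkm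
    · rintro ⟨h2, hmk⟩
      have hmt : m ≤ t := le_trans hmk (Nat.div_le_self t k)
      refine ⟨⟨h2, hmt⟩, ?_⟩
      rw [Nat.le_div_iff_mul_le (by omega : 0 < m)]
      rw [Nat.le_div_iff_mul_le hk] at hmk
      rw [mul_comm]; exact hmk
  have h2 : Multiset.card (Multiset.filter (fun a => k ≤ t / a) (Finset.Icc 2 t).val)
      = ((Finset.Icc 2 t).filter (fun m => k ≤ t / m)).card := rfl
  rw [h2, hfil, Nat.card_Icc]
  omega

lemma card_Istar (t : ℕ) : (Istar t).card = t - 1 := by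
  simp only [Istar, Multiset.card_map]
  have : ((Finset.Icc 2 t).val).card = (Finset.Icc 2 t).card := rfl
  rw [this, Nat.card_Icc]
  omega

lemma rel_le_of_countP : ∀ (n : ℕ) (A B : Multiset ℕ), A.card = n → A.card = B.card →
    (∀ k, A.countP (fun a => k ≤ a) ≤ B.countP (fun b => k ≤ b)) →
    Multiset.Rel (· ≤ ·) A B := by
  intro n
  induction n with
  | zero =>
    intro A B hA hAB _
    rw [Multiset.card_eq_zero] at hA
    subst hA
    have hB : B = 0 := by
      rw [← Multiset.card_eq_zero]; simpa using hAB.symm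
    subst hB
    exact Multiset.Rel.zero
  | succ n ih =>
    intro A B hA hAB h
    have hAne : A ≠ 0 := by
      intro h0; rw [h0] at hA; simp at hA
    have hFne : A.toFinset.Nonempty := by
      rw [Multiset.toFinset_nonempty]; exact hAne
    set a := A.toFinset.max' hFne with ha
    have haA : a ∈ A := Multiset.mem_toFinset.1 (A.toFinset.max'_mem hFne)
    have hmax : ∀ x ∈ A, x ≤ a := fun x hx =>
      A.toFinset.le_max' x (Multiset.mem_toFinset.2 hx)
    -- find b in B with a ≤ b
    have hpos : 0 < A.countP (fun x => a ≤ x) :=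
      Multiset.countP_pos.2 ⟨a, haA, le_refl a⟩
    have hposB : 0 < B.countP (fun x => a ≤ x) := lt_of_lt_of_le hpos (h a)
    obtain ⟨b, hbB, hab⟩ := Multiset.countP_pos.1 hposB
    set A' := A.erase a with hA'
    set B' := B.erase b with hB'
    have hAeq : a ::ₘ A' = A := Multiset.cons_erase haA
    have hBeq : b ::ₘ B' = B := Multiset.cons_erase hbB
    have hcA : A'.card = n := by
      have := Multiset.card_cons a A'
      rw [hAeq] at this; omega
    have hcB : A'.card = B'.card := by
      have h1 := Multiset.card_cons a A'
      have h2 := Multiset.card_cons b B'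
      rw [hAeq] at h1; rw [hBeq] at h2; omega
    have hcount : ∀ k, A'.countP (fun x => k ≤ x) ≤ B'.countP (fun x => k ≤ x) := by
      intro k
      have e1 : A.countP (fun x => k ≤ x)
          = A'.countP (fun x => k ≤ x) + if k ≤ a then 1 else 0 := by
        rw [← hAeq, Multiset.countP_cons]
      have e2 : B.countP (fun x => k ≤ x)
          = B'.countP (fun x => k ≤ x) + if k ≤ b then 1 else 0 := by
        rw [← hBeq, Multiset.countP_cons]
      by_cases hka : k ≤ a
      · have hkb : k ≤ b := le_trans hka hab
        have := h k
        rw [e1, e2, if_pos hka, if_pos hkb] at this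
        omega
      · have hz : A'.countP (fun x => k ≤ x) = 0 := by
          rw [Multiset.countP_eq_zero]
          intro x hx
          have : x ∈ A := Multiset.mem_of_mem_erase hx
          exact fun hkx => hka (le_trans hkx (hmax x this))
        omega
    have hrel := ih A' B' hcA hcB hcount
    have := Multiset.Rel.cons hab hrel
    rwa [hAeq, hBeq] at this

theorem stmt_3 (r s : ℕ) (hr : 1 ≤ r) (hrs : r ≤ s) :
    Multiset.Rel (· ≤ ·) (r ::ₘ (Istar r + Istar s)) (Istar (r + s)) := by
  have hs : 1 ≤ s := hr.trans hrs
  have hcard : (r ::ₘ (Istar r + Istar s)).card = (Istar (r + s)).card := by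
    rw [Multiset.card_cons, Multiset.card_add, card_Istar, card_Istar, card_Istar]
    omega
  refine rel_le_of_countP _ _ _ rfl hcard ?_
  intro k
  rcases Nat.eq_zero_or_pos k with h0 | hk
  · subst h0
    have hall : ∀ (M : Multiset ℕ), M.countP (fun a => 0 ≤ a) = M.card := by
      intro M
      rw [Multiset.countP_eq_card]
      intro a _; exact Nat.zero_le a
    rw [hall, hall, hcard]
  · rw [Multiset.countP_cons, Multiset.countP_add,
      countP_Istar r k hk, countP_Istar s k hk, countP_Istar (r+s) k hk]
    have hdiv : r / k + s / k ≤ (r + s) / k := by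
      rw [Nat.le_div_iff_mul_le hk, add_mul]
      exact Nat.add_le_add (Nat.div_mul_le_self r k) (Nat.div_mul_le_self s k)
    by_cases hkr : k ≤ r
    · have h1 : 1 ≤ r / k := (Nat.one_le_div_iff hk).2 hkr
      have h2 : 1 ≤ s / k := (Nat.one_le_div_iff hk).2 (le_trans hkr hrs)
      rw [if_pos hkr]
      omega
    · have hr0 : r / k = 0 := Nat.div_eq_of_lt (by omega)
      have hle : s / k ≤ (r + s) / k := Nat.div_le_div_right (by omega)
      rw [if_neg hkr]
      omega
end

section
/- Let X be a homogeneous polynomial vector field of degree r+1 and v a homogeneous polynomial vector field of degree s+1 on ℂⁿ. Then the Lie bracket L_X v, with components (L_X v)_j = Σ_l (X_l ∂v_j/∂x_l − v_l ∂X_j/∂x_l), satisfies ‖L_X v‖ ≤ (r+s+2)·‖X‖·‖v‖ in the coefficient ℓ¹ norm. -/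
open MvPolynomial

/-- ℓ¹ norm on coefficients of a polynomial: `‖f‖ = Σ_k |f_k|`. -/
noncomputable def pnorm {n : ℕ} (f : MvPolynomial (Fin n) ℂ) : ℝ :=
  ∑ k ∈ f.support, ‖f.coeff k‖

/-- ℓ¹ norm of a polynomial vector field: `‖X‖ = Σ_j ‖X_j‖`. -/
noncomputable def vnorm {n : ℕ} (X : Fin n → MvPolynomial (Fin n) ℂ) : ℝ :=
  ∑ j, pnorm (X j)

lemma pnorm_nonneg {n : ℕ} (f : MvPolynomial (Fin n) ℂ) : 0 ≤ pnorm f :=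
  Finset.sum_nonneg fun _ _ => norm_nonneg _

lemma pnorm_eq_sum {n : ℕ} (f : MvPolynomial (Fin n) ℂ) (s : Finset ((Fin n) →₀ ℕ))
    (h : f.support ⊆ s) : pnorm f = ∑ k ∈ s, ‖f.coeff k‖ := by
  refine Finset.sum_subset h fun k _ hk => ?_
  simp [MvPolynomial.notMem_support_iff.mp hk]

lemma pnorm_zero {n : ℕ} : pnorm (0 : MvPolynomial (Fin n) ℂ) = 0 := by
  simp [pnorm]

lemma pnorm_add_le {n : ℕ} (f g : MvPolynomial (Fin n) ℂ) :
    pnorm (f + g) ≤ pnorm f + pnorm g := by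
  rw [pnorm_eq_sum (f + g) (f.support ∪ g.support)
      (le_trans (MvPolynomial.support_add) le_rfl),
    pnorm_eq_sum f (f.support ∪ g.support) Finset.subset_union_left,
    pnorm_eq_sum g (f.support ∪ g.support) Finset.subset_union_right,
    ← Finset.sum_add_distrib]
  refine Finset.sum_le_sum fun k _ => ?_
  rw [MvPolynomial.coeff_add]
  exact norm_add_le _ _

lemma pnorm_sum_le {n : ℕ} {ι : Type*} (t : Finset ι) (F : ι → MvPolynomial (Fin n) ℂ) :
    pnorm (∑ i ∈ t, F i) ≤ ∑ i ∈ t, pnorm (F i) := by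
  classical
  induction t using Finset.induction_on with
  | empty => simp [pnorm_zero]
  | insert _ _ h ih =>
    rw [Finset.sum_insert h, Finset.sum_insert h]
    exact le_trans (pnorm_add_le _ _) (by linarith)

lemma pnorm_neg {n : ℕ} (f : MvPolynomial (Fin n) ℂ) : pnorm (-f) = pnorm f := by
  unfold pnorm
  rw [MvPolynomial.support_neg]
  exact Finset.sum_congr rfl fun k _ => by simp

lemma pnorm_sub_le {n : ℕ} (f g : MvPolynomial (Fin n) ℂ) :
    pnorm (f - g) ≤ pnorm f + pnorm g := by
  rw [sub_eq_add_neg]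
  exact le_trans (pnorm_add_le _ _) (by rw [pnorm_neg])

lemma pnorm_monomial_le {n : ℕ} (k : (Fin n) →₀ ℕ) (c : ℂ) :
    pnorm (monomial k c) ≤ ‖c‖ := by
  rw [pnorm_eq_sum _ {k} MvPolynomial.support_monomial_subset]
  simp [MvPolynomial.coeff_monomial]

lemma pnorm_mul_le {n : ℕ} (f g : MvPolynomial (Fin n) ℂ) :
    pnorm (f * g) ≤ pnorm f * pnorm g := by
  have hfg : f * g = ∑ a ∈ f.support, ∑ b ∈ g.support,
      monomial (a + b) (f.coeff a * g.coeff b) := by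
    conv_lhs => rw [f.as_sum, g.as_sum]
    rw [Finset.sum_mul_sum]
    simp [MvPolynomial.monomial_mul]
  rw [hfg]
  refine le_trans (pnorm_sum_le _ _) ?_
  rw [pnorm, Finset.sum_mul]
  refine Finset.sum_le_sum fun a _ => ?_
  refine le_trans (pnorm_sum_le _ _) ?_
  rw [pnorm, Finset.mul_sum]
  refine Finset.sum_le_sum fun b _ => ?_
  refine le_trans (pnorm_monomial_le _ _) ?_
  rw [norm_mul]

lemma pnorm_pderiv_le {n d : ℕ} (f : MvPolynomial (Fin n) ℂ)
    (hf : f.IsHomogeneous d) (l : Fin n) :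
    pnorm (pderiv l f) ≤ d * pnorm f := by
  have h : pderiv l f = ∑ k ∈ f.support,
      monomial (k - Finsupp.single l 1) (f.coeff k * k l) := by
    conv_lhs => rw [f.as_sum]
    rw [map_sum]
    simp [MvPolynomial.pderiv_monomial]
  rw [h]
  refine le_trans (pnorm_sum_le _ _) ?_
  rw [pnorm, Finset.mul_sum]
  refine Finset.sum_le_sum fun k hk => ?_
  refine le_trans (pnorm_monomial_le _ _) ?_
  rw [norm_mul]
  have hkl : (k l : ℝ) ≤ d := by
    have hdeg : (Finsupp.weight 1) k = d := hf (MvPolynomial.mem_support_iff.mp hk)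
    have := Finsupp.le_weight (1 : Fin n → ℕ) (s := l) one_ne_zero k
    rw [hdeg] at this
    exact_mod_cast this
  calc ‖f.coeff k‖ * ‖((k l : ℂ))‖
      = (k l : ℝ) * ‖f.coeff k‖ := by
        rw [mul_comm]; norm_num
    _ ≤ d * ‖f.coeff k‖ := by
        exact mul_le_mul_of_nonneg_right hkl (norm_nonneg _)

theorem stmt_7 (n r s : ℕ) (X v : Fin n → MvPolynomial (Fin n) ℂ)
    (hX : ∀ j, (X j).IsHomogeneous (r + 1)) (hv : ∀ j, (v j).IsHomogeneous (s + 1)) :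
    vnorm (fun j => ∑ l, (X l * pderiv l (v j) - v l * pderiv l (X j)))
      ≤ (r + s + 2) * vnorm X * vnorm v := by
  have key : ∀ j : Fin n, pnorm (∑ l, (X l * pderiv l (v j) - v l * pderiv l (X j)))
      ≤ ∑ l, ((s + 1 : ℝ) * (pnorm (X l) * pnorm (v j))
        + (r + 1 : ℝ) * (pnorm (v l) * pnorm (X j))) := by
    intro j
    refine le_trans (pnorm_sum_le _ _) (Finset.sum_le_sum fun l _ => ?_)
    refine le_trans (pnorm_sub_le _ _) (add_le_add ?_ ?_)
    · refine le_trans (pnorm_mul_le _ _) ?_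
      have h := pnorm_pderiv_le (v j) (hv j) l
      push_cast at h
      nlinarith [pnorm_nonneg (X l), pnorm_nonneg (v j), pnorm_nonneg (pderiv l (v j))]
    · refine le_trans (pnorm_mul_le _ _) ?_
      have h := pnorm_pderiv_le (X j) (hX j) l
      push_cast at h
      nlinarith [pnorm_nonneg (v l), pnorm_nonneg (X j), pnorm_nonneg (pderiv l (X j))]
  calc vnorm (fun j => ∑ l, (X l * pderiv l (v j) - v l * pderiv l (X j)))
      ≤ ∑ j, ∑ l, ((s + 1 : ℝ) * (pnorm (X l) * pnorm (v j))
        + (r + 1 : ℝ) * (pnorm (v l) * pnorm (X j))) :=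
        Finset.sum_le_sum fun j _ => key j
    _ = (r + s + 2) * vnorm X * vnorm v := by
        simp only [vnorm, Finset.sum_add_distrib, ← Finset.mul_sum, ← Finset.sum_mul]
        ring
end

section
/- Let Γ = −Σ_{r≥1} ln(α_{r})/(r(r+1)) and B = −Σ_{k≥1} ln(α_{2^k−1})/2^k, where (α_r)_{r≥0} is a non-increasing sequence in (0,1] with α_0 = 1. Then Γ ≤ B ≤ 2Γ. -/
open Finset Filter Topology

/-- Telescoping sum `∑_{j<n} 1/((N+j)(N+j+1)) = 1/N - 1/(N+n)`. -/
lemma stmt_13_tele (N n : ℕ) (hN : 0 < N) :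
    ∑ j ∈ Finset.range n, (1 : ℝ) / (((N : ℝ) + j) * ((N : ℝ) + j + 1))
      = 1 / (N : ℝ) - 1 / ((N : ℝ) + n) := by
  have hN' : (0 : ℝ) < N := by exact_mod_cast hN
  have key : ∀ j : ℕ, (1 : ℝ) / (((N : ℝ) + j) * ((N : ℝ) + j + 1))
      = (fun j : ℕ => 1 / ((N : ℝ) + j)) j - (fun j : ℕ => 1 / ((N : ℝ) + j)) (j + 1) := by
    intro j
    have h1 : (0 : ℝ) < (N : ℝ) + j := by positivity
    have h2 : (0 : ℝ) < (N : ℝ) + ((j + 1 : ℕ) : ℝ) := by positivity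
    simp only []
    rw [div_sub_div _ _ h1.ne' h2.ne', div_eq_div_iff (by positivity) (by positivity)]
    push_cast
    ring
  rw [Finset.sum_congr rfl fun j _ => key j, Finset.sum_range_sub']
  simp

/-- `Γ ≤ B ≤ 2Γ` where `Γ = -Σ_{r≥1} ln α_r/(r(r+1))` and `B = -Σ_{k≥1} ln α_{2^k-1}/2^k`,
for a non-increasing sequence `(α_r)` in `(0,1]` with `α_0 = 1`. -/
theorem stmt_13 (α : ℕ → ℝ) (hmono : Antitone α) (h0 : α 0 = 1)
    (hpos : ∀ r, 0 < α r) (hle : ∀ r, α r ≤ 1)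
    (hΓ : Summable fun r : ℕ => -Real.log (α (r + 1)) / ((r + 1 : ℝ) * (r + 2)))
    (hB : Summable fun k : ℕ => -Real.log (α (2 ^ (k + 1) - 1)) / (2 ^ (k + 1) : ℝ)) :
    (∑' r : ℕ, -Real.log (α (r + 1)) / ((r + 1 : ℝ) * (r + 2)))
        ≤ (∑' k : ℕ, -Real.log (α (2 ^ (k + 1) - 1)) / (2 ^ (k + 1) : ℝ)) ∧
      (∑' k : ℕ, -Real.log (α (2 ^ (k + 1) - 1)) / (2 ^ (k + 1) : ℝ))
        ≤ 2 * ∑' r : ℕ, -Real.log (α (r + 1)) / ((r + 1 : ℝ) * (r + 2)) := by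
  set a : ℕ → ℝ := fun n => -Real.log (α n) with ha
  set f : ℕ → ℝ := fun r => -Real.log (α (r + 1)) / ((r + 1 : ℝ) * (r + 2)) with hf
  set g : ℕ → ℝ := fun k => -Real.log (α (2 ^ (k + 1) - 1)) / (2 ^ (k + 1) : ℝ) with hg
  have hann : ∀ n, 0 ≤ a n := fun n => by
    simpa [ha] using neg_nonneg.mpr (Real.log_nonpos (hpos n).le (hle n))
  have hamono : Monotone a := fun m n hmn => by
    simp only [ha]
    have := Real.log_le_log (hpos n) (hmono hmn)
    linarith
  have hfnn : ∀ r, 0 ≤ f r := fun r => by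
    apply div_nonneg (hann (r + 1))
    positivity
  have hgnn : ∀ k, 0 ≤ g k := fun k => by
    apply div_nonneg (hann _)
    positivity
  -- block sums
  set S : ℕ → ℝ := fun k => ∑ j ∈ Finset.range (2 ^ k), f (2 ^ k - 1 + j) with hS
  have hSnn : ∀ k, 0 ≤ S k := fun k => Finset.sum_nonneg fun j _ => hfnn _
  -- rewrite block terms
  have hfval : ∀ k j : ℕ, f (2 ^ k - 1 + j)
      = a (2 ^ k + j) / (((2 : ℝ) ^ k + j) * ((2 : ℝ) ^ k + j + 1)) := by
    intro k j
    have h1 : (1 : ℕ) ≤ 2 ^ k := Nat.one_le_two_pow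
    have e1 : 2 ^ k - 1 + j + 1 = 2 ^ k + j := by omega
    have e2 : ((2 ^ k - 1 + j : ℕ) : ℝ) = (2 : ℝ) ^ k + j - 1 := by
      push_cast [h1]
      ring
    simp only [hf, ha, e1, e2]
    ring_nf
  -- telescoping value for blocks
  have hsum1 : ∀ k : ℕ, ∑ j ∈ Finset.range (2 ^ k),
      (1 : ℝ) / (((2 : ℝ) ^ k + j) * ((2 : ℝ) ^ k + j + 1)) = 1 / (2 : ℝ) ^ (k + 1) := by
    intro k
    have h := stmt_13_tele (2 ^ k) (2 ^ k) (by positivity)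
    push_cast at h
    rw [h]
    have h2 : (0 : ℝ) < (2 : ℝ) ^ k := by positivity
    rw [show ((2 : ℝ) ^ k + (2 : ℝ) ^ k) = (2 : ℝ) ^ (k + 1) by ring]
    field_simp
    ring
  -- partial sums of S are partial sums of f
  have hpsum : ∀ K, ∑ k ∈ Finset.range K, S k = ∑ r ∈ Finset.range (2 ^ K - 1), f r := by
    intro K
    induction K with
    | zero => simp [hS]
    | succ K ih =>
      have e : 2 ^ (K + 1) - 1 = (2 ^ K - 1) + 2 ^ K := by
        have : (1 : ℕ) ≤ 2 ^ K := Nat.one_le_two_pow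
        omega
      rw [Finset.sum_range_succ, ih, e, Finset.sum_range_add]
  -- Summable S and tsum S = Γ
  have hSsum : Summable S := by
    apply summable_of_sum_range_le hSnn
    intro K
    rw [hpsum K]
    exact Summable.sum_le_tsum _ (fun r _ => hfnn r) hΓ
  have htsumS : ∑' k, S k = ∑' r, f r := by
    have h2 : Tendsto (fun K : ℕ => 2 ^ K - 1) atTop atTop := by
      refine tendsto_atTop_mono (fun K => ?_) tendsto_id
      have := Nat.lt_two_pow_self (n := K)
      simp only [id]
      omega
    have h3 := hΓ.hasSum.tendsto_sum_nat.comp h2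
    have h1 : Tendsto (fun K => ∑ k ∈ Finset.range K, S k) atTop (𝓝 (∑' r, f r)) := by
      refine Filter.Tendsto.congr (fun K => ?_) h3
      simp only [Function.comp]
      exact (hpsum K).symm
    exact tendsto_nhds_unique hSsum.hasSum.tendsto_sum_nat h1
  -- upper bound: S k ≤ g k
  have hSg : ∀ k, S k ≤ g k := by
    intro k
    have hk1 : (1 : ℕ) ≤ 2 ^ (k + 1) := Nat.one_le_two_pow
    calc S k = ∑ j ∈ Finset.range (2 ^ k),
          a (2 ^ k + j) / (((2 : ℝ) ^ k + j) * ((2 : ℝ) ^ k + j + 1)) :=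
        Finset.sum_congr rfl fun j _ => hfval k j
      _ ≤ ∑ j ∈ Finset.range (2 ^ k),
          a (2 ^ (k + 1) - 1) / (((2 : ℝ) ^ k + j) * ((2 : ℝ) ^ k + j + 1)) := by
        apply Finset.sum_le_sum
        intro j hj
        have hjlt : j < 2 ^ k := Finset.mem_range.mp hj
        have hle' : 2 ^ k + j ≤ 2 ^ (k + 1) - 1 := by
          have : 2 ^ (k + 1) = 2 ^ k + 2 ^ k := by ring
          omega
        have hd : (0 : ℝ) < ((2 : ℝ) ^ k + j) * ((2 : ℝ) ^ k + j + 1) := by positivity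
        exact div_le_div_of_nonneg_right (hamono hle') hd.le
      _ = a (2 ^ (k + 1) - 1) * ∑ j ∈ Finset.range (2 ^ k),
          (1 : ℝ) / (((2 : ℝ) ^ k + j) * ((2 : ℝ) ^ k + j + 1)) := by
        rw [Finset.mul_sum]
        exact Finset.sum_congr rfl fun j _ => (mul_one_div _ _).symm
      _ = a (2 ^ (k + 1) - 1) * (1 / (2 : ℝ) ^ (k + 1)) := by rw [hsum1]
      _ = g k := by simp only [hg, ha]; rw [mul_one_div]
  -- lower bound: g k ≤ 2 * S (k + 1)
  have hgS : ∀ k, g k ≤ 2 * S (k + 1) := by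
    intro k
    have hk1 : (1 : ℕ) ≤ 2 ^ (k + 1) := Nat.one_le_two_pow
    have hlow : a (2 ^ (k + 1) - 1) * (1 / (2 : ℝ) ^ (k + 2)) ≤ S (k + 1) := by
      calc a (2 ^ (k + 1) - 1) * (1 / (2 : ℝ) ^ (k + 2))
          = a (2 ^ (k + 1) - 1) * ∑ j ∈ Finset.range (2 ^ (k + 1)),
            (1 : ℝ) / (((2 : ℝ) ^ (k + 1) + j) * ((2 : ℝ) ^ (k + 1) + j + 1)) := by
            rw [hsum1]
        _ = ∑ j ∈ Finset.range (2 ^ (k + 1)),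
            a (2 ^ (k + 1) - 1) / (((2 : ℝ) ^ (k + 1) + j) * ((2 : ℝ) ^ (k + 1) + j + 1)) := by
            rw [Finset.mul_sum]
            exact Finset.sum_congr rfl fun j _ => mul_one_div _ _
        _ ≤ ∑ j ∈ Finset.range (2 ^ (k + 1)),
            a (2 ^ (k + 1) + j) / (((2 : ℝ) ^ (k + 1) + j) * ((2 : ℝ) ^ (k + 1) + j + 1)) := by
            apply Finset.sum_le_sum
            intro j hj
            have hd : (0 : ℝ) < ((2 : ℝ) ^ (k + 1) + j) * ((2 : ℝ) ^ (k + 1) + j + 1) := by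
              positivity
            exact div_le_div_of_nonneg_right (hamono (by omega)) hd.le
        _ = S (k + 1) := (Finset.sum_congr rfl fun j _ => (hfval (k + 1) j).symm)
    have hgk : g k = a (2 ^ (k + 1) - 1) * (1 / (2 : ℝ) ^ (k + 1)) := by
      simp only [hg, ha]; rw [mul_one_div]
    have : (1 : ℝ) / (2 : ℝ) ^ (k + 1) = 2 * (1 / (2 : ℝ) ^ (k + 2)) := by
      rw [show ((2 : ℝ) ^ (k + 2)) = 2 * (2 : ℝ) ^ (k + 1) by ring]
      field_simp
    rw [hgk, this]
    nlinarith [hlow]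
  constructor
  · rw [← htsumS]
    exact Summable.tsum_le_tsum hSg hSsum hB
  · have hshift : Summable (fun k => S (k + 1)) := (summable_nat_add_iff 1).mpr hSsum
    have hzero : ∑' k, S k = S 0 + ∑' k, S (k + 1) := Summable.tsum_eq_zero_add hSsum
    calc (∑' k, g k) ≤ ∑' k, 2 * S (k + 1) := Summable.tsum_le_tsum hgS hB (hshift.mul_left 2)
      _ = 2 * ∑' k, S (k + 1) := tsum_mul_left
      _ ≤ 2 * ∑' k, S k := by nlinarith [hSnn 0]
      _ = 2 * ∑' r, f r := by rw [htsumS]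
end

section
/- Iterated Cauchy estimate: under the hypotheses of the preceding Cauchy-type estimate, for every integer s ≥ 1 one has |L_X^s f|_{ρ−δ} ≤ (s!/e)·(e|X|_ρ/δ)^s·|f|_ρ. -/
/-- The closed polydisk of radius `ρ` centered at the origin of `ℂⁿ`. -/
def polydisk (n : ℕ) (ρ : ℝ) : Set (Fin n → ℂ) := {x | ∀ j, ‖x j‖ ≤ ρ}

/-- Supremum norm of a function on the polydisk of radius `ρ`. -/
noncomputable def supNorm (n : ℕ) (ρ : ℝ) (f : (Fin n → ℂ) → ℂ) : ℝ :=
  sSup ((fun x => ‖f x‖) '' polydisk n ρ)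

/-- The Lie derivative operator `L_X f = Σ_j X_j ∂f/∂x_j`. -/
noncomputable def lieDeriv (n : ℕ) (X : Fin n → (Fin n → ℂ) → ℂ)
    (f : (Fin n → ℂ) → ℂ) : (Fin n → ℂ) → ℂ :=
  fun x => ∑ j, X j x * fderiv ℂ f x (Pi.single j 1)

/-- The open polydisk. -/
def openPolydisk (n : ℕ) (ρ : ℝ) : Set (Fin n → ℂ) := {x | ∀ j, ‖x j‖ < ρ}

lemma isCompact_polydisk (n : ℕ) (ρ : ℝ) : IsCompact (polydisk n ρ) := by
  have : polydisk n ρ = Set.pi Set.univ (fun _ => Metric.closedBall (0:ℂ) ρ) := by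
    ext x; simp [polydisk, Set.mem_pi, Complex.dist_eq]
  rw [this]
  exact isCompact_univ_pi fun _ => isCompact_closedBall _ _

lemma isOpen_openPolydisk (n : ℕ) (ρ : ℝ) : IsOpen (openPolydisk n ρ) := by
  have : openPolydisk n ρ = Set.pi Set.univ (fun _ => Metric.ball (0:ℂ) ρ) := by
    ext x; simp [openPolydisk, Set.mem_pi, Complex.dist_eq]
  rw [this]
  exact isOpen_set_pi Set.finite_univ fun _ _ => Metric.isOpen_ball

lemma openPolydisk_subset (n : ℕ) (ρ : ℝ) : openPolydisk n ρ ⊆ polydisk n ρ :=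
  fun _ hx j => (hx j).le

lemma supNorm_nonneg (n : ℕ) (ρ : ℝ) (f : (Fin n → ℂ) → ℂ) : 0 ≤ supNorm n ρ f := by
  apply Real.sSup_nonneg
  rintro y ⟨x, -, rfl⟩
  exact norm_nonneg _

lemma le_supNorm {n : ℕ} {ρ : ℝ} {f : (Fin n → ℂ) → ℂ}
    (hc : ContinuousOn f (polydisk n ρ)) {x : Fin n → ℂ} (hx : x ∈ polydisk n ρ) :
    ‖f x‖ ≤ supNorm n ρ f := by
  apply le_csSup
  · exact ((isCompact_polydisk n ρ).image_of_continuousOn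
      (continuous_norm.comp_continuousOn hc)).bddAbove
  · exact Set.mem_image_of_mem _ hx

lemma pow_mul_exp_le (s : ℕ) (hs : 1 ≤ s) :
    (s:ℝ)^s * Real.exp 1 ≤ Real.exp 1 ^ s * s.factorial := by
  induction s, hs using Nat.le_induction with
  | base => simp
  | succ s hs ih =>
    have hs0 : (0:ℝ) < s := by exact_mod_cast hs
    have h1 : ((s:ℝ)+1) ≤ s * Real.exp (1/s) := by
      have hinv : (s:ℝ) * (1/s) = 1 := by field_simp
      nlinarith [mul_le_mul_of_nonneg_left (Real.add_one_le_exp (1/(s:ℝ))) hs0.le]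
    have h2 : ((s:ℝ)+1)^s ≤ Real.exp 1 * s^s := by
      calc ((s:ℝ)+1)^s ≤ (s * Real.exp (1/s))^s := by gcongr
        _ = s^s * Real.exp (1/s) ^ s := by rw [mul_pow]
        _ = Real.exp 1 * s^s := by
            rw [← Real.exp_nat_mul, mul_one_div, div_self hs0.ne', mul_comm]
    have e1 : (0:ℝ) < Real.exp 1 := Real.exp_pos 1
    push_cast
    calc ((s:ℝ)+1)^(s+1) * Real.exp 1 = ((s:ℝ)+1)^s * ((s+1) * Real.exp 1) := by ring
      _ ≤ (Real.exp 1 * s^s) * ((s+1) * Real.exp 1) := by gcongr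
      _ = (s^s * Real.exp 1) * ((s+1) * Real.exp 1) := by ring
      _ ≤ (Real.exp 1 ^ s * s.factorial) * ((s+1) * Real.exp 1) := by gcongr
      _ = Real.exp 1 ^ (s+1) * (s.factorial * (s+1)) := by ring
      _ = Real.exp 1 ^ (s+1) * (s+1).factorial := by
          rw [Nat.factorial_succ]; push_cast; ring

/-- Cauchy estimate for one partial derivative via a one-dimensional slice. -/
lemma cauchy_slice {n : ℕ} {σ η C : ℝ} (hη : 0 < η) {g : (Fin n → ℂ) → ℂ}
    (hdiff : ∀ y ∈ openPolydisk n σ, DifferentiableAt ℂ g y)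
    (hcont : ContinuousOn g (polydisk n σ))
    (hC : ∀ y ∈ polydisk n σ, ‖g y‖ ≤ C)
    {x : Fin n → ℂ} (hx : ∀ i, ‖x i‖ ≤ σ - η) (j : Fin n) :
    ‖fderiv ℂ g x (Pi.single j 1)‖ ≤ C / η := by
  set v : Fin n → ℂ := Pi.single j 1 with hv_def
  have hslice_eq : (fun z : ℂ => Function.update x j z)
      = fun z : ℂ => (x - x j • v) + z • v := by
    funext z
    funext i
    by_cases h : i = j
    · subst h
      simp [hv_def, Pi.single_apply]
    · simp [Function.update_apply, h, hv_def, Pi.single_apply]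
  have hderiv_slice : ∀ z₀ : ℂ, HasDerivAt (fun z : ℂ => Function.update x j z) v z₀ := by
    intro z₀
    rw [hslice_eq]
    have h1 : HasDerivAt (fun z : ℂ => z • v) ((1:ℂ) • v) z₀ := (hasDerivAt_id z₀).smul_const v
    rw [one_smul] at h1
    exact h1.const_add _
  have hslice_cont : Continuous (fun z : ℂ => Function.update x j z) := by
    rw [hslice_eq]
    exact continuous_const.add (continuous_id.smul continuous_const)
  have habs : ∀ z : ℂ, ‖z‖ ≤ ‖z - x j‖ + ‖x j‖ := by
    intro z
    simpa using norm_add_le (z - x j) (x j)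
  have hmaps : ∀ z ∈ Metric.closedBall (x j) η, Function.update x j z ∈ polydisk n σ := by
    intro z hz i
    rw [Metric.mem_closedBall, Complex.dist_eq] at hz
    by_cases h : i = j
    · subst h
      rw [Function.update_self]
      have := habs z
      have := hx i
      linarith
    · rw [Function.update_of_ne h]
      have := hx i
      linarith
  have hmapsU : ∀ z ∈ Metric.ball (x j) η, Function.update x j z ∈ openPolydisk n σ := by
    intro z hz i
    rw [Metric.mem_ball, Complex.dist_eq] at hz
    by_cases h : i = j
    · subst h
      rw [Function.update_self]
      have := habs z
      have := hx i
      linarith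
    · rw [Function.update_of_ne h]
      have := hx i
      linarith
  have hdc : DiffContOnCl ℂ (g ∘ fun z : ℂ => Function.update x j z) (Metric.ball (x j) η) := by
    constructor
    · intro z hz
      exact ((hdiff _ (hmapsU z hz)).comp z
        (hderiv_slice z).differentiableAt).differentiableWithinAt
    · rw [closure_ball _ hη.ne']
      exact hcont.comp hslice_cont.continuousOn hmaps
  have hsphere : ∀ z ∈ Metric.sphere (x j) η,
      ‖(g ∘ fun z : ℂ => Function.update x j z) z‖ ≤ C := by
    intro z hz
    exact hC _ (hmaps z (Metric.sphere_subset_closedBall hz))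
  have hcd := Complex.norm_deriv_le_of_forall_mem_sphere_norm_le hη hdc hsphere
  have hxmem : Function.update x j (x j) = x := Function.update_eq_self j x
  have hxU : x ∈ openPolydisk n σ := fun i => lt_of_le_of_lt (hx i) (by linarith)
  have hcomp : HasDerivAt (g ∘ fun z : ℂ => Function.update x j z)
      (fderiv ℂ g x v) (x j) := by
    have h : HasFDerivAt g (fderiv ℂ g x) ((fun z : ℂ => Function.update x j z) (x j)) := by
      show HasFDerivAt g (fderiv ℂ g x) (Function.update x j (x j))
      rw [hxmem]
      exact (hdiff x hxU).hasFDerivAt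
    exact h.comp_hasDerivAt (x j) (hderiv_slice (x j))
  rw [← hcomp.deriv]
  exact hcd

set_option maxHeartbeats 1000000 in
/-- Iterated Cauchy estimate: `|L_X^s f|_{ρ-δ} ≤ (s!/e) (e|X|_ρ/δ)^s |f|_ρ`. -/
theorem stmt_15 (n : ℕ) (ρ δ : ℝ) (h0 : 0 < δ) (h2 : δ < ρ)
    (f : (Fin n → ℂ) → ℂ) (X : Fin n → (Fin n → ℂ) → ℂ)
    (hf : AnalyticOn ℂ f (polydisk n ρ))
    (hX : ∀ j, AnalyticOn ℂ (X j) (polydisk n ρ))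
    (s : ℕ) (hs : 1 ≤ s) :
    supNorm n (ρ - δ) ((lieDeriv n X)^[s] f)
      ≤ (s.factorial / Real.exp 1) *
          (Real.exp 1 * (∑ j, supNorm n ρ (X j)) / δ) ^ s * supNorm n ρ f := by
  have hs0 : (0:ℝ) < s := by exact_mod_cast hs
  set η : ℝ := δ / s with hη_def
  have hη : 0 < η := div_pos h0 hs0
  set M : ℝ := ∑ j, supNorm n ρ (X j) with hM_def
  set F : ℝ := supNorm n ρ f with hF_def
  have hM : 0 ≤ M := Finset.sum_nonneg fun j _ => supNorm_nonneg n ρ (X j)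
  have hF : 0 ≤ F := supNorm_nonneg n ρ f
  have hUo : IsOpen (openPolydisk n ρ) := isOpen_openPolydisk n ρ
  have hUsub : openPolydisk n ρ ⊆ polydisk n ρ := openPolydisk_subset n ρ
  have hfU : AnalyticOnNhd ℂ f (openPolydisk n ρ) :=
    (hUo.analyticOn_iff_analyticOnNhd).mp (hf.mono hUsub)
  have hXU : ∀ j, AnalyticOnNhd ℂ (X j) (openPolydisk n ρ) := fun j =>
    (hUo.analyticOn_iff_analyticOnNhd).mp ((hX j).mono hUsub)
  -- all iterates are analytic on the open polydisk
  have hiter : ∀ k, AnalyticOnNhd ℂ ((lieDeriv n X)^[k] f) (openPolydisk n ρ) := by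
    intro k
    induction k with
    | zero => simpa using hfU
    | succ k ih =>
      rw [Function.iterate_succ_apply']
      show AnalyticOnNhd ℂ
        (fun x => ∑ j, X j x * fderiv ℂ ((lieDeriv n X)^[k] f) x (Pi.single j 1))
        (openPolydisk n ρ)
      apply Finset.analyticOnNhd_fun_sum
      intro j _
      have h1 : AnalyticOnNhd ℂ
          (fun z => fderiv ℂ ((lieDeriv n X)^[k] f) z (Pi.single j 1)) (openPolydisk n ρ) := by
        have h2 := (ContinuousLinearMap.apply ℂ ℂ
          (Pi.single j 1 : Fin n → ℂ)).comp_analyticOnNhd ih.fderiv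
        simpa [Function.comp_def] using h2
      exact (hXU j).mul h1
  -- key pointwise estimate by induction
  have key : ∀ k : ℕ, ∀ x ∈ polydisk n (ρ - k * η),
      ‖((lieDeriv n X)^[k] f) x‖ ≤ (M / η)^k * F := by
    intro k
    induction k with
    | zero =>
      intro x hx
      simp only [Nat.cast_zero, zero_mul, sub_zero] at hx
      simpa using le_supNorm hf.continuousOn hx
    | succ k ih =>
      intro x hx
      have hk0 : (0:ℝ) ≤ (k:ℝ) := Nat.cast_nonneg k
      have hx' : ∀ i, ‖x i‖ ≤ (ρ - k * η) - η := by
        intro i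
        have := hx i
        push_cast at this
        linarith
      have hxρ : x ∈ polydisk n ρ := fun i => by
        have := hx' i; nlinarith
      -- continuity of the k-th iterate on the closed polydisk of radius ρ - k η
      have hcont : ContinuousOn ((lieDeriv n X)^[k] f) (polydisk n (ρ - k * η)) := by
        cases k with
        | zero =>
          simp only [Nat.cast_zero, zero_mul, sub_zero, Function.iterate_zero, id_eq]
          exact hf.continuousOn
        | succ m =>
          apply ((hiter (m+1)).continuousOn).mono
          intro y hy i
          have := hy i
          have hm0 : (0:ℝ) ≤ (m:ℝ) := Nat.cast_nonneg m
          push_cast at this ⊢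
          nlinarith
      have hdiffk : ∀ y ∈ openPolydisk n (ρ - k * η),
          DifferentiableAt ℂ ((lieDeriv n X)^[k] f) y := by
        intro y hy
        refine ((hiter k) y fun i => lt_of_lt_of_le (hy i) ?_).differentiableAt
        nlinarith
      -- Cauchy estimate on each partial derivative
      have hD : ∀ j, ‖fderiv ℂ ((lieDeriv n X)^[k] f) x (Pi.single j 1)‖
          ≤ ((M / η)^k * F) / η :=
        fun j => cauchy_slice hη hdiffk hcont ih hx' j
      -- combine
      rw [Function.iterate_succ_apply']
      show ‖∑ j, X j x * fderiv ℂ ((lieDeriv n X)^[k] f) x (Pi.single j 1)‖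
        ≤ (M / η)^(k+1) * F
      calc ‖∑ j, X j x * fderiv ℂ ((lieDeriv n X)^[k] f) x (Pi.single j 1)‖
          ≤ ∑ j, ‖X j x * fderiv ℂ ((lieDeriv n X)^[k] f) x (Pi.single j 1)‖ := by
            simpa using norm_sum_le Finset.univ
              (fun j => X j x * fderiv ℂ ((lieDeriv n X)^[k] f) x (Pi.single j 1))
        _ = ∑ j, ‖X j x‖ *
              ‖fderiv ℂ ((lieDeriv n X)^[k] f) x (Pi.single j 1)‖ := by
            simp [map_mul]
        _ ≤ ∑ j, supNorm n ρ (X j) * (((M / η)^k * F) / η) := by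
            apply Finset.sum_le_sum
            intro j _
            exact mul_le_mul (le_supNorm (hX j).continuousOn hxρ) (hD j)
              (norm_nonneg _) (supNorm_nonneg n ρ (X j))
        _ = M * (((M / η)^k * F) / η) := by rw [← Finset.sum_mul]
        _ = (M / η)^(k+1) * F := by
            field_simp
            have hne : η ≠ 0 := hη.ne'
            have hh : η * (M / η) = M := by field_simp
            rw [pow_succ]
            linear_combination (-(F * (M / η) ^ k)) * hh
  -- conclude
  have hfinal : supNorm n (ρ - δ) ((lieDeriv n X)^[s] f) ≤ (M / η)^s * F := by
    apply Real.sSup_le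
    · rintro y ⟨x, hx, rfl⟩
      have hδη : ρ - (s:ℝ) * η = ρ - δ := by
        rw [hη_def]
        field_simp
      exact key s x (by rw [hδη]; exact hx)
    · exact mul_nonneg (pow_nonneg (div_nonneg hM hη.le) s) hF
  refine hfinal.trans ?_
  have hMη : (M / η)^s = M^s * (s:ℝ)^s / δ^s := by
    rw [hη_def, div_div_eq_mul_div, div_pow, mul_pow]
  have hfac : (M / η)^s ≤ ((s.factorial : ℝ) / Real.exp 1) * (Real.exp 1 * M / δ) ^ s := by
    have e1 : (0:ℝ) < Real.exp 1 := Real.exp_pos 1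
    have hkey := pow_mul_exp_le s hs
    have h4 : M ^ s * (s:ℝ) ^ s ≤ (s.factorial : ℝ) * (Real.exp 1 ^ s * M ^ s) / Real.exp 1 := by
      rw [le_div_iff₀ e1]
      nlinarith [mul_le_mul_of_nonneg_left hkey (pow_nonneg hM s)]
    calc (M / η)^s = M ^ s * (s:ℝ)^s / δ ^ s := hMη
      _ ≤ ((s.factorial : ℝ) * (Real.exp 1 ^ s * M ^ s) / Real.exp 1) / δ ^ s := by gcongr
      _ = ((s.factorial : ℝ) / Real.exp 1) * (Real.exp 1 * M / δ) ^ s := by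
          rw [div_pow, mul_pow]
          ring
  calc (M / η)^s * F ≤ (((s.factorial : ℝ) / Real.exp 1) * (Real.exp 1 * M / δ) ^ s) * F :=
        mul_le_mul_of_nonneg_right hfac hF
    _ = ((s.factorial : ℝ) / Real.exp 1) * (Real.exp 1 * M / δ) ^ s * F := by ring
end

section
/- Non-recursive formula for the Lie transform operators: if E_0 = Id and E_s = Σ_{j=1}^{s} (j/s)·L_{X_j}∘E_{s−j} for s ≥ 1, then for s ≥ 1, E_s = Σ_{k=1}^{s} Σ_{j_1+…+j_k = s, j_i ≥ 1} [j_k⋯j_1 / ((j_1+…+j_k)(j_1+…+j_{k−1})⋯j_1)]·L_{X_{j_k}}∘…∘L_{X_{j_1}}. -/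
open Finset

namespace Stmt18Aux

variable {A : Type*} [Ring A] [Algebra ℚ A]

noncomputable def coef {s k : ℕ} (j : Fin k → Fin (s + 1)) : ℚ :=
  (∏ i : Fin k, ((j i : ℕ) : ℚ)) /
    (∏ i : Fin k, ((∑ l ∈ Finset.univ.filter (fun l => l ≤ i), (j l : ℕ) : ℕ) : ℚ))

def comps (s k : ℕ) : Finset (Fin k → Fin (s + 1)) :=
  Finset.univ.filter (fun j => (∀ i, 1 ≤ (j i : ℕ)) ∧ ∑ i, (j i : ℕ) = s)

lemma mem_comps {s k : ℕ} {j : Fin k → Fin (s + 1)} :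
    j ∈ comps s k ↔ (∀ i, 1 ≤ (j i : ℕ)) ∧ ∑ i, (j i : ℕ) = s := by
  simp [comps]

noncomputable def term (L : ℕ → A) {s k : ℕ} (j : Fin k → Fin (s + 1)) : A :=
  coef j • (List.ofFn (fun i : Fin k => L (j i : ℕ))).reverse.prod

noncomputable def G (L : ℕ → A) (s : ℕ) : A :=
  ∑ k ∈ Finset.range (s + 1), ∑ j ∈ comps s k, term L j

lemma sum_filter_castSucc {n : ℕ} (f : Fin (n + 1) → ℕ) (i : Fin n) :
    ∑ l ∈ univ.filter (fun l => l ≤ i.castSucc), f l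
      = ∑ l ∈ univ.filter (fun l => l ≤ i), f l.castSucc := by
  have hset : (univ.filter (fun l : Fin (n + 1) => l ≤ i.castSucc)) =
      (univ.filter (fun l : Fin n => l ≤ i)).map Fin.castSuccEmb := by
    ext l
    simp only [mem_filter, mem_univ, true_and, Finset.mem_map]
    constructor
    · intro hl
      rw [Fin.le_def] at hl
      simp only [Fin.coe_castSucc] at hl
      have hlt : (l : ℕ) < n := lt_of_le_of_lt hl i.isLt
      exact ⟨⟨l, hlt⟩, by rw [Fin.le_def]; exact hl, by ext; simp [Fin.castSuccEmb]⟩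
    · rintro ⟨a, ha, rfl⟩
      rw [Fin.le_def] at ha ⊢
      simpa [Fin.castSuccEmb] using ha
  rw [hset, Finset.sum_map]
  rfl

lemma sum_filter_last {n : ℕ} (f : Fin (n + 1) → ℕ) :
    ∑ l ∈ univ.filter (fun l => l ≤ Fin.last n), f l = ∑ l, f l := by
  simp [Fin.le_last]

lemma comps_zero {s : ℕ} (hs : 1 ≤ s) (L : ℕ → A) :
    ∑ j ∈ comps s 0, term L j = 0 := by
  rw [comps, Finset.filter_false_of_mem, Finset.sum_empty]
  intro j _ h
  have := h.2
  simp only [Finset.univ_eq_empty, Finset.sum_empty] at this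
  omega

lemma bound {s k : ℕ} (j : Fin (k + 1) → Fin (s + 1)) (hj : j ∈ comps s (k + 1)) (i : Fin k) :
    (j i.castSucc : ℕ) < s - (j (Fin.last k) : ℕ) + 1 := by
  obtain ⟨-, hsum⟩ := (Finset.mem_filter.mp hj).2
  rw [Fin.sum_univ_castSucc] at hsum
  have h1 : (j i.castSucc : ℕ) ≤ ∑ i : Fin k, (j i.castSucc : ℕ) :=
    Finset.single_le_sum (f := fun i : Fin k => (j i.castSucc : ℕ))
      (fun _ _ => Nat.zero_le _) (Finset.mem_univ i)
  omega

lemma Grec (L : ℕ → A) (s : ℕ) (hs : 1 ≤ s) :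
    G L s = ∑ m ∈ Finset.Icc 1 s, ((m : ℚ) / s) • (L m * G L (s - m)) := by
  -- rewrite RHS
  have hrhs : ∑ m ∈ Finset.Icc 1 s, ((m : ℚ) / s) • (L m * G L (s - m))
      = ∑ m ∈ Finset.Icc 1 s, ∑ k ∈ Finset.range (s - m + 1), ∑ j ∈ comps (s - m) k,
          (((m : ℚ) / s) * coef j) •
            (L m * (List.ofFn (fun i : Fin k => L (j i : ℕ))).reverse.prod) := by
    refine Finset.sum_congr rfl fun m _ => ?_
    rw [G, Finset.mul_sum, Finset.smul_sum]
    refine Finset.sum_congr rfl fun k _ => ?_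
    rw [Finset.mul_sum, Finset.smul_sum]
    refine Finset.sum_congr rfl fun j _ => ?_
    rw [term, mul_smul_comm, smul_smul]
  rw [hrhs]
  -- rewrite LHS
  rw [G, Finset.sum_range_succ', comps_zero hs L, add_zero]
  rw [Finset.sum_sigma']
  conv_rhs => rw [Finset.sum_sigma']; rw [Finset.sum_sigma']
  refine Finset.sum_bij'
    (fun a ha => ⟨⟨(a.2 (Fin.last a.1) : ℕ), a.1⟩, fun i =>
      ⟨(a.2 i.castSucc : ℕ), bound a.2 (Finset.mem_sigma.mp ha).2 i⟩⟩)
    (fun b hb => ⟨b.1.2, Fin.snoc (fun i => Fin.castLE (by omega) (b.2 i))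
      ⟨b.1.1, by
        have h := (Finset.mem_sigma.mp (Finset.mem_sigma.mp hb).1).1
        rw [Finset.mem_Icc] at h
        omega⟩⟩)
    ?_ ?_ ?_ ?_ ?_
  · -- forward membership
    rintro ⟨k, j⟩ ha
    simp only [Finset.mem_sigma, Finset.mem_range, mem_comps] at ha
    obtain ⟨hk, hpos, hsum⟩ := ha
    rw [Fin.sum_univ_castSucc] at hsum
    have hknat : (k : ℕ) ≤ ∑ i : Fin k, (j i.castSucc : ℕ) := by
      calc (k : ℕ) = ∑ _i : Fin k, 1 := by simp
      _ ≤ _ := Finset.sum_le_sum (fun i _ => hpos i.castSucc)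
    simp only [Finset.mem_sigma, Finset.mem_Icc, Finset.mem_range, mem_comps]
    refine ⟨⟨⟨hpos _, by omega⟩, by omega⟩, fun i => ?_, ?_⟩
    · exact hpos i.castSucc
    · omega
  · -- backward membership
    rintro ⟨⟨m, k⟩, j⟩ hb
    simp only [Finset.mem_sigma, Finset.mem_Icc, Finset.mem_range, mem_comps] at hb
    obtain ⟨⟨hm, hk⟩, hpos, hsum⟩ := hb
    simp only [Finset.mem_sigma, Finset.mem_range, mem_comps]
    refine ⟨by omega, fun i => ?_, ?_⟩
    · refine Fin.lastCases ?_ (fun i' => ?_) i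
      · simp only [Fin.snoc_last]
        omega
      · simp only [Fin.snoc_castSucc, Fin.coe_castLE]
        exact hpos i'
    · rw [Fin.sum_univ_castSucc]
      simp only [Fin.snoc_last, Fin.snoc_castSucc, Fin.coe_castLE]
      omega
  · -- left inverse
    rintro ⟨k, j⟩ ha
    dsimp only
    refine Sigma.ext rfl (heq_of_eq ?_)
    funext i
    refine Fin.lastCases ?_ (fun i' => ?_) i
    · simp only [Fin.snoc_last]
    · simp only [Fin.snoc_castSucc]
      ext
      simp
  · -- right inverse
    rintro ⟨⟨m, k⟩, j⟩ hb
    dsimp only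
    have key : ∀ (m' : ℕ) (hm' : m' = m) (f : Fin k → Fin (s - m' + 1)),
        (∀ i, (f i : ℕ) = (j i : ℕ)) → HEq f j := by
      rintro m' rfl f hfj
      exact heq_of_eq (funext fun i => Fin.ext (hfj i))
    refine Sigma.ext ?_ (key _ ?_ _ ?_)
    · refine Sigma.ext ?_ HEq.rfl
      simp
    · simp
    · intro i
      simp
  · -- values
    rintro ⟨k, j⟩ ha
    simp only [Finset.mem_sigma, Finset.mem_range, mem_comps] at ha
    obtain ⟨hk, hpos, hsum⟩ := ha
    dsimp only
    rw [term, List.ofFn_succ']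
    simp only [List.concat_eq_append, List.reverse_append, List.reverse_cons,
      List.reverse_nil, List.nil_append, List.singleton_append, List.prod_cons]
    congr 1
    · -- coefficients
      rw [coef, coef]
      rw [Fin.prod_univ_castSucc (fun i => ((j i : ℕ) : ℚ))]
      rw [Fin.prod_univ_castSucc
        (fun i : Fin (k + 1) =>
          ((∑ l ∈ Finset.univ.filter (fun l => l ≤ i), (j l : ℕ) : ℕ) : ℚ))]
      have hnum : ∀ i : Fin k,
          ∑ l ∈ univ.filter (fun l => l ≤ i.castSucc), (j l : ℕ)
            = ∑ l ∈ univ.filter (fun l => l ≤ i), (j l.castSucc : ℕ) :=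
        fun i => sum_filter_castSucc (fun l => (j l : ℕ)) i
      rw [sum_filter_last (fun l => (j l : ℕ)), hsum]
      simp only [hnum]
      push_cast
      ring

lemma G_zero (L : ℕ → A) : G L 0 = 1 := by
  simp [G, comps, term, coef]

end Stmt18Aux

/-- Non-recursive formula for the Lie transform operators: if `E_0 = 1` and
`E_s = Σ_{j=1}^s (j/s) L_j E_{s-j}`, then `E_s` is the sum, over all compositions
`(j_1, …, j_k)` of `s` into positive parts, of
`[j_k ⋯ j_1 / ((j_1+…+j_k)(j_1+…+j_{k-1}) ⋯ j_1)] · L_{j_k} ∘ … ∘ L_{j_1}`.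
The operators are taken in an associative algebra over `ℚ`; a composition is encoded
as a map `j : Fin k → Fin (s+1)` with positive values summing to `s`. -/
theorem stmt_18 {A : Type*} [Ring A] [Algebra ℚ A] (L E : ℕ → A)
    (hE0 : E 0 = 1)
    (hrec : ∀ s : ℕ, 1 ≤ s →
      E s = ∑ j ∈ Finset.Icc 1 s, ((j : ℚ) / s) • (L j * E (s - j)))
    (s : ℕ) (hs : 1 ≤ s) :
    E s = ∑ k ∈ Finset.Icc 1 s,
      ∑ j ∈ Finset.univ.filter
          (fun j : Fin k → Fin (s + 1) => (∀ i, 1 ≤ (j i : ℕ)) ∧ ∑ i, (j i : ℕ) = s),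
        ((∏ i : Fin k, ((j i : ℕ) : ℚ)) /
            (∏ i : Fin k, ((∑ l ∈ Finset.univ.filter (fun l => l ≤ i), (j l : ℕ) : ℕ) : ℚ))) •
          (List.ofFn (fun i : Fin k => L (j i : ℕ))).reverse.prod := by
  have key : ∀ s, E s = Stmt18Aux.G L s := by
    intro s
    induction s using Nat.strong_induction_on with
    | _ s ih =>
      rcases Nat.eq_zero_or_pos s with rfl | hs'
      · rw [hE0, Stmt18Aux.G_zero]
      · rw [hrec s hs', Stmt18Aux.Grec L s hs']
        refine Finset.sum_congr rfl fun m hm => ?_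
        rw [Finset.mem_Icc] at hm
        rw [ih (s - m) (by omega)]
  rw [key s, Stmt18Aux.G]
  have hins : Finset.range (s + 1) = insert 0 (Finset.Icc 1 s) := by
    ext x; simp; omega
  rw [hins, Finset.sum_insert (by simp), Stmt18Aux.comps_zero hs L, zero_add]
  rfl
end
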